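/- arXiv:1805.05658 — 2 statements merged into one kernel-verified Lean document; each statement's English description precedes it below -/
import Mathlib

section
/- Let E be a ring and d ∈ H(E) a square-zero element of the Hurwitz series ring with shift derivation j. Suppose there exists γ ∈ H(E) with j(d) = d*γ - γ*d. Then there exists an invertible φ ∈ H(E) with constant term 1 satisfying j(φ) = φ*γ, and the conjugate d' = φ*d*φ^{-1} satisfies j(d') = 0 (i.e., d' is a constant sequence (d'_0, 0, 0, ...)). -/
/-!
Since `jop` is the shift, `jop φ = φ γ` with `φ 0 = 1` is a recursion for the coefficients of `φ`,
and `φ` is invertible because its constant term is. As `jop` is a derivation, the inverse `ψ`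
satisfies `jop ψ = -γ ψ`, so `jop (φ d ψ) = φ (jop d - (d γ - γ d)) ψ`, which vanishes by hypothesis.
-/

/-- Hurwitz (binomial) convolution of sequences. -/
def hmul {E : Type*} [Ring E] (f g : ℕ → E) : ℕ → E :=
  fun n => ∑ i ∈ Finset.range (n + 1), (n.choose i) • (f i * g (n - i))

/-- The identity of the Hurwitz series ring. -/
def hone {E : Type*} [Ring E] : ℕ → E := fun n => if n = 0 then 1 else 0

/-- The shift operator. -/
def jop {E : Type*} (f : ℕ → E) : ℕ → E := fun n => f (n + 1)

section Hurwitz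

variable {E : Type*} [Ring E]

open Finset

lemma hone_hmul (f : ℕ → E) : hmul hone f = f := by
  funext n
  rw [hmul, sum_eq_single 0] <;> simp +contextual [hone]

lemma hmul_hone (f : ℕ → E) : hmul f hone = f := by
  funext n
  rw [hmul, sum_eq_single n]
  · simp [hone]
  · intro i hi hin
    simp [hone, show n - i ≠ 0 by grind]
  · simp

lemma add_hmul (f g h : ℕ → E) : hmul (f + g) h = hmul f h + hmul g h := by
  funext n
  simp [hmul, add_mul, sum_add_distrib]

lemma hmul_neg (f g : ℕ → E) : hmul f (-g) = -hmul f g := by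
  funext n
  simp [hmul]

lemma hmul_sub (f g h : ℕ → E) : hmul f (g - h) = hmul f g - hmul f h := by
  funext n
  simp [hmul, mul_sub, sum_sub_distrib]

lemma sub_hmul (f g h : ℕ → E) : hmul (f - g) h = hmul f h - hmul g h := by
  funext n
  simp [hmul, sub_mul, smul_sub, sum_sub_distrib]

lemma hmul_zero (f : ℕ → E) : hmul f 0 = 0 := by
  funext n
  simp [hmul]

lemma zero_hmul (f : ℕ → E) : hmul 0 f = 0 := by
  funext n
  simp [hmul]

lemma hmul_assoc (f g h : ℕ → E) : hmul (hmul f g) h = hmul f (hmul g h) := by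
  funext n
  simp only [hmul, sum_mul, mul_sum, smul_sum, smul_mul_assoc, mul_smul_comm, smul_smul]
  rw [sum_sigma', sum_sigma']
  -- reindex `(i, j) ↦ (j, i - j)`; the coefficients agree as `C(n,i) C(i,j) = C(n,j) C(n-j,i-j)`
  refine sum_nbij' (fun p => ⟨p.2, p.1 - p.2⟩) (fun p => ⟨p.1 + p.2, p.1⟩) ?_ ?_ ?_ ?_ ?_
  all_goals rintro ⟨i, j⟩ hp; simp only [mem_sigma, mem_range] at hp
  · simp only [mem_sigma, mem_range]; omega
  · simp only [mem_sigma, mem_range]; omega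
  · exact Sigma.ext (by dsimp only; omega) HEq.rfl
  · exact Sigma.ext rfl (heq_of_eq (by dsimp only; omega))
  · rw [Nat.choose_mul (n := n) (by omega : j ≤ i), show n - i = n - j - (i - j) by omega,
      mul_assoc]

lemma jop_hone : jop (hone : ℕ → E) = 0 := by
  funext n
  simp [jop, hone]

lemma jop_hmul (f g : ℕ → E) : jop (hmul f g) = hmul (jop f) g + hmul f (jop g) := by
  funext n
  rw [Pi.add_apply, add_comm]
  refine (sum_choose_succ_nsmul (fun i j => f i * g j) n).trans (congrArg₂ _ ?_ rfl)
  refine sum_congr rfl fun i hi => ?_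
  simp only [jop, show n + 1 - i = n - i + 1 by grind]

noncomputable def hinvLeft (f : ℕ → E) : ℕ → E
  | 0 => Ring.inverse (f 0)
  | n + 1 => -(∑ i : Fin (n + 1), (n + 1).choose i • (hinvLeft f i * f (n + 1 - i))) *
      Ring.inverse (f 0)

noncomputable def hinvRight (f : ℕ → E) : ℕ → E
  | 0 => Ring.inverse (f 0)
  | n + 1 => -Ring.inverse (f 0) *
      ∑ i : Fin (n + 1), (n + 1).choose (i + 1) • (f (i + 1) * hinvRight f (n - i))

lemma hinvLeft_hmul {f : ℕ → E} (hf : IsUnit (f 0)) : hmul (hinvLeft f) f = hone := by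
  funext n
  cases n with
  | zero => simp [hmul, hone, hinvLeft, Ring.inverse_mul_cancel _ hf]
  | succ n =>
    rw [hmul, sum_range_succ, ← Fin.sum_univ_eq_sum_range (fun i => (n + 1).choose i • _)]
    simp [hinvLeft, hone, mul_assoc, Ring.inverse_mul_cancel _ hf]

lemma hmul_hinvRight {f : ℕ → E} (hf : IsUnit (f 0)) : hmul f (hinvRight f) = hone := by
  funext n
  cases n with
  | zero => simp [hmul, hone, hinvRight, Ring.mul_inverse_cancel _ hf]
  | succ n =>
    rw [hmul, sum_range_succ', ← Fin.sum_univ_eq_sum_range (fun i => (n + 1).choose (i + 1) • _)]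
    simp [hinvRight, hone, ← mul_assoc, Ring.mul_inverse_cancel _ hf]

lemma hmul_hinvLeft {f : ℕ → E} (hf : IsUnit (f 0)) : hmul f (hinvLeft f) = hone := by
  have hleft_eq_right : hinvLeft f = hinvRight f := by
    calc hinvLeft f = hmul (hmul (hinvLeft f) f) (hinvRight f) := by
          rw [hmul_assoc, hmul_hinvRight hf, hmul_hone]
      _ = hinvRight f := by rw [hinvLeft_hmul hf, hone_hmul]
  rw [hleft_eq_right, hmul_hinvRight hf]

lemma jop_of_hmul_eq_hone {φ ψ : ℕ → E} (hφψ : hmul φ ψ = hone) (hψφ : hmul ψ φ = hone) :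
    jop ψ = -hmul (hmul ψ (jop φ)) ψ := by
  have hleibniz : hmul (jop φ) ψ + hmul φ (jop ψ) = 0 := by
    rw [← jop_hmul, hφψ, jop_hone]
  calc jop ψ = hmul ψ (hmul φ (jop ψ)) := by rw [← hmul_assoc, hψφ, hone_hmul]
    _ = hmul ψ (-hmul (jop φ) ψ) := by rw [eq_neg_of_add_eq_zero_right hleibniz]
    _ = -hmul (hmul ψ (jop φ)) ψ := by rw [hmul_neg, hmul_assoc]

/-- Gauge transformation: if `jop φ = φ γ`, conjugating by `φ` turns `jop` into `jop + [γ, ·]`. -/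
lemma jop_conj {φ ψ γ : ℕ → E} (hφψ : hmul φ ψ = hone) (hψφ : hmul ψ φ = hone)
    (hφ : jop φ = hmul φ γ) (d : ℕ → E) :
    jop (hmul (hmul φ d) ψ) = hmul (hmul φ (jop d - (hmul d γ - hmul γ d))) ψ := by
  rw [jop_hmul, jop_hmul, jop_of_hmul_eq_hone hφψ hψφ, hφ, ← hmul_assoc ψ φ γ, hψφ, hone_hmul,
    hmul_sub, hmul_sub, hmul_neg, add_hmul, sub_hmul, sub_hmul]
  simp only [hmul_assoc]
  abel

def fundamentalSolution (γ : ℕ → E) : ℕ → E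
  | 0 => 1
  | n + 1 => ∑ i : Fin (n + 1), n.choose i • (fundamentalSolution γ i * γ (n - i))

lemma fundamentalSolution_zero (γ : ℕ → E) : fundamentalSolution γ 0 = 1 := by
  rw [fundamentalSolution]

lemma jop_fundamentalSolution (γ : ℕ → E) :
    jop (fundamentalSolution γ) = hmul (fundamentalSolution γ) γ := by
  funext n
  rw [jop, fundamentalSolution, hmul]
  exact Fin.sum_univ_eq_sum_range (fun i => n.choose i • (fundamentalSolution γ i * γ (n - i))) _

end Hurwitz

theorem hurwitz_lifting_general {E : Type*} [Ring E] (d γ : ℕ → E)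
    (hγ : jop d = hmul d γ - hmul γ d) :
    ∃ φ ψ : ℕ → E,
      hmul φ ψ = hone ∧ hmul ψ φ = hone ∧
      φ 0 = 1 ∧ jop φ = hmul φ γ ∧
      jop (hmul (hmul φ d) ψ) = 0 := by
  have hunit : IsUnit (fundamentalSolution γ 0) := by
    rw [fundamentalSolution_zero]; exact isUnit_one
  have hφψ := hmul_hinvLeft hunit
  have hψφ := hinvLeft_hmul hunit
  have hφ := jop_fundamentalSolution γ
  refine ⟨_, _, hφψ, hψφ, fundamentalSolution_zero γ, hφ, ?_⟩
  rw [jop_conj hφψ hψφ hφ, hγ, sub_self, hmul_zero, zero_hmul]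

/-- If `d` is square-zero in the Hurwitz series ring and `j(d) = d*γ - γ*d` for
some `γ`, then there is an invertible `φ` with constant term `1` satisfying
`j(φ) = φ*γ`, and the conjugate `d' = φ*d*φ⁻¹` satisfies `j(d') = 0`. -/
theorem hurwitz_lifting {E : Type*} [Ring E] (d γ : ℕ → E)
    (hd : hmul d d = 0)
    (hγ : jop d = hmul d γ - hmul γ d) :
    ∃ φ ψ : ℕ → E,
      hmul φ ψ = hone ∧ hmul ψ φ = hone ∧
      φ 0 = 1 ∧ jop φ = hmul φ γ ∧
      jop (hmul (hmul φ d) ψ) = 0 :=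
  hurwitz_lifting_general d γ hγ
end

section
/- Let E be a ring and d ∈ H(E) square-zero in the Hurwitz series ring over E. If there exists an invertible φ ∈ H(E) and a constant sequence c = (c₀, 0, 0, ...) with φ * d * φ^{-1} = c, then j(d) = d*f - f*d for f = φ^{-1} * j(φ); i.e., the shift j(d) is a commutator with d. -/
section Hurwitz

variable {E : Type*} [Ring E]

open Finset

lemma hmul_add (f g h : ℕ → E) : hmul f (g + h) = hmul f g + hmul f h := by
  funext n
  simp [hmul, mul_add, sum_add_distrib]

lemma jop_const (c₀ : E) : jop (fun n => if n = 0 then c₀ else 0) = 0 := by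
  funext n
  simp [jop]

lemma hmul_jop_of_hmul_eq_hone {φ ψ : ℕ → E} (h : hmul ψ φ = hone) :
    hmul (jop ψ) φ = -hmul ψ (jop φ) := by
  rw [eq_neg_iff_add_eq_zero, ← jop_hmul, h, jop_hone]

lemma hmul_jop_conj_hmul {d φ ψ : ℕ → E} (h : hmul ψ φ = hone) :
    hmul ψ (hmul (jop (hmul (hmul φ d) ψ)) φ) =
      jop d + hmul (hmul ψ (jop φ)) d - hmul d (hmul ψ (jop φ)) := by
  have hcancel : ∀ x, hmul ψ (hmul φ x) = x := fun x => by
    rw [← hmul_assoc, h, hone_hmul]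
  simp only [jop_hmul, add_hmul, hmul_add, hmul_assoc, h, hmul_hone, hcancel,
    hmul_jop_of_hmul_eq_hone h, hmul_neg]
  abel

end Hurwitz

theorem jop_is_commutator_of_conjugate_constant_general {E : Type*} [Ring E]
    (d φ ψ : ℕ → E) (c₀ : E)
    (h2 : hmul ψ φ = hone)
    (hc : hmul (hmul φ d) ψ = fun n => if n = 0 then c₀ else 0) :
    jop d = hmul d (hmul ψ (jop φ)) - hmul (hmul ψ (jop φ)) d := by
  have hzero := hmul_jop_conj_hmul (d := d) h2
  rw [hc, jop_const, zero_hmul, hmul_zero, eq_comm, sub_eq_zero] at hzero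
  rw [← hzero]
  abel

/-- If a square-zero `d` is conjugated by an invertible `φ` to a constant sequence,
then `j(d)` is the commutator `d*f - f*d` with `f = φ⁻¹ * j(φ)`. -/
theorem jop_is_commutator_of_conjugate_constant {E : Type*} [Ring E]
    (d φ ψ : ℕ → E) (c₀ : E)
    (hd : hmul d d = 0)
    (h1 : hmul φ ψ = hone) (h2 : hmul ψ φ = hone)
    (hc : hmul (hmul φ d) ψ = fun n => if n = 0 then c₀ else 0) :
    jop d = hmul d (hmul ψ (jop φ)) - hmul (hmul ψ (jop φ)) d :=
  jop_is_commutator_of_conjugate_constant_general d φ ψ c₀ h2 hc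
end
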